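/- Let E : ℝ^d → GL(ℝ^d) assign to each x a symmetric matrix, Lipschitz in x, with all eigenvalues ≥ a > 1/2. Then there exists C₂ > 0 such that for all x, y ∈ ℝ^d, ∫_{S^{d−1}} ∫₀¹ ‖r^{E(x)}θ − r^{E(y)}θ‖² r^{−2} dr σ(dθ) ≤ C₂ ‖x − y‖², where σ is a fixed finite measure on S^{d−1}. -/

import Mathlib

/-! For `t = log r ≤ 0` and a symmetric `A` with spectrum in `[a, ∞)`, diagonalising `A` in an
orthonormal eigenbasis gives `‖exp (t A)‖ ≤ e^{ta} = r^a`. Differentiating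
`s ↦ exp (s t A) exp ((1 - s) t B)` (Duhamel's formula) then gives
`‖r^A - r^B‖ ≤ |log r| ‖A - B‖ r^a`, so the integrand is at most
`L² ‖x - y‖² log² r · r^(2a-2)`, which is integrable on `(0, 1)` since `2a - 2 > -1`. -/

open Matrix MeasureTheory
open scoped ENNReal

noncomputable def toCLM {d : ℕ} (A : Matrix (Fin d) (Fin d) ℝ) :
    EuclideanSpace ℝ (Fin d) →L[ℝ] EuclideanSpace ℝ (Fin d) :=
  LinearMap.toContinuousLinearMap (Matrix.toEuclideanLin A)

/-- `mexp A r` is the matrix power `r^A := exp(A log r)`, acting on Euclidean space,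
so that `‖mexp A r‖` is the operator norm induced by the Euclidean norm. -/
noncomputable def mexp {d : ℕ} (A : Matrix (Fin d) (Fin d) ℝ) (r : ℝ) :
    EuclideanSpace ℝ (Fin d) →L[ℝ] EuclideanSpace ℝ (Fin d) :=
  NormedSpace.exp (Real.log r • toCLM A)

open NormedSpace

theorem ContinuousLinearMap.exp_apply_of_apply_eq_smul {𝕂 E : Type*} [RCLike 𝕂]
    [NormedAddCommGroup E] [NormedSpace 𝕂 E] [CompleteSpace E] {T : E →L[𝕂] E} {v : E} {c : 𝕂}
    (h : T v = c • v) : exp T v = exp c • v := by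
  have hpow (n : ℕ) : (T ^ n) v = c ^ n • v := by
    induction n with
    | zero => simp
    | succ n ih =>
      rw [pow_succ', mul_def, comp_apply, ih, map_smul, h, smul_smul, pow_succ]
  have hsum := (exp_series_hasSum_exp' (𝕂 := 𝕂) T).mapL (apply 𝕂 E v)
  simp only [apply_apply, _root_.smul_apply, hpow, smul_smul] at hsum
  exact hsum.unique ((exp_series_hasSum_exp' (𝕂 := 𝕂) c).smul_const v)

theorem ContinuousLinearMap.opNorm_le_of_apply_orthonormalBasis {𝕜 E ι : Type*} [RCLike 𝕜]
    [NormedAddCommGroup E] [InnerProductSpace 𝕜 E] [Fintype ι] (b : OrthonormalBasis ι 𝕜 E)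
    {T : E →L[𝕜] E} {μ : ι → 𝕜} (hT : ∀ i, T (b i) = μ i • b i) {C : ℝ} (hC : 0 ≤ C)
    (hμ : ∀ i, ‖μ i‖ ≤ C) : ‖T‖ ≤ C := by
  refine opNorm_le_bound _ hC fun v ↦ ?_
  have hcoord (j : ι) : inner 𝕜 (b j) (T v) = μ j * inner 𝕜 (b j) v := by
    conv_lhs => rw [← b.sum_repr' v]
    simp only [map_sum, map_smul, hT, smul_smul, b.orthonormal.inner_right_fintype, mul_comm]
  refine le_of_pow_le_pow_left₀ two_ne_zero (by positivity) ?_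
  rw [mul_pow, ← b.sum_sq_norm_inner_right, ← b.sum_sq_norm_inner_right, Finset.mul_sum]
  gcongr with j
  rw [hcoord, norm_mul, mul_pow]
  gcongr
  exact hμ j

theorem toCLM_eigenvectorBasis {n : ℕ} {A : Matrix (Fin n) (Fin n) ℝ} (hA : A.IsHermitian)
    (i : Fin n) : toCLM A (hA.eigenvectorBasis i) = hA.eigenvalues i • hA.eigenvectorBasis i := by
  apply WithLp.ofLp_injective
  simpa [toCLM] using hA.mulVec_eigenvectorBasis i

theorem norm_exp_smul_toCLM_le {n : ℕ} {A : Matrix (Fin n) (Fin n) ℝ} (hA : A.IsHermitian)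
    {a t : ℝ} (heig : ∀ i, a ≤ hA.eigenvalues i) (ht : t ≤ 0) :
    ‖exp (t • toCLM A)‖ ≤ Real.exp (t * a) := by
  refine ContinuousLinearMap.opNorm_le_of_apply_orthonormalBasis hA.eigenvectorBasis
    (μ := fun i ↦ Real.exp (t * hA.eigenvalues i))
    (fun i ↦ ?_) (Real.exp_nonneg _) fun i ↦ ?_
  · rw [Real.exp_eq_exp_ℝ]
    refine ContinuousLinearMap.exp_apply_of_apply_eq_smul ?_
    rw [_root_.smul_apply, toCLM_eigenvectorBasis, smul_smul]
  · rw [Real.norm_of_nonneg (Real.exp_nonneg _), Real.exp_le_exp]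
    exact mul_le_mul_of_nonpos_left (heig i) ht

theorem norm_exp_smul_sub_exp_smul_le {𝔸 : Type*} [NormedRing 𝔸] [NormedAlgebra ℝ 𝔸]
    [CompleteSpace 𝔸] {X Y : 𝔸} {a t : ℝ} (ht : t ≤ 0)
    (hX : ∀ τ ≤ 0, ‖exp (τ • X)‖ ≤ Real.exp (τ * a))
    (hY : ∀ τ ≤ 0, ‖exp (τ • Y)‖ ≤ Real.exp (τ * a)) :
    ‖exp (t • X) - exp (t • Y)‖ ≤ |t| * ‖X - Y‖ * Real.exp (t * a) := by
  set f : ℝ → 𝔸 := fun s ↦ exp ((s * t) • X) * exp (((1 - s) * t) • Y)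
  set f' : ℝ → 𝔸 := fun s ↦ t • (exp ((s * t) • X) * (X - Y) * exp (((1 - s) * t) • Y))
  have hf (s : ℝ) : HasDerivAt f (f' s) s := by
    have hX' := (hasDerivAt_exp_smul_const X (s * t)).scomp s ((hasDerivAt_id' s).mul_const t)
    have hY' := (hasDerivAt_exp_smul_const' Y ((1 - s) * t)).scomp s
      (((hasDerivAt_id' s).const_sub 1).mul_const t)
    refine (hX'.mul hY').congr_deriv ?_
    simp only [f', Function.comp_apply, one_mul, neg_mul, neg_smul, mul_neg, smul_mul_assoc,
      mul_smul_comm, mul_assoc, sub_mul, mul_sub, smul_sub, ← sub_eq_add_neg]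
  have hf' : ∀ s ∈ Set.Icc (0 : ℝ) 1, ‖f' s‖ ≤ |t| * ‖X - Y‖ * Real.exp (t * a) := by
    rintro s ⟨hs0, hs1⟩
    calc ‖f' s‖ ≤ |t| * (‖exp ((s * t) • X)‖ * ‖X - Y‖ * ‖exp (((1 - s) * t) • Y)‖) := by
          rw [norm_smul, Real.norm_eq_abs]
          gcongr
          exact norm_mul₃_le
      _ ≤ |t| * (Real.exp ((s * t) * a) * ‖X - Y‖ * Real.exp (((1 - s) * t) * a)) := by
          gcongr
          exacts [hX _ (mul_nonpos_of_nonneg_of_nonpos hs0 ht),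
            hY _ (mul_nonpos_of_nonneg_of_nonpos (sub_nonneg.2 hs1) ht)]
      _ = |t| * ‖X - Y‖ * Real.exp (t * a) := by
          rw [mul_right_comm _ ‖X - Y‖, ← Real.exp_add]; ring_nf
  have := (convex_Icc (0 : ℝ) 1).norm_image_sub_le_of_norm_hasDerivWithin_le
    (fun s _ ↦ (hf s).hasDerivWithinAt) hf' (Set.left_mem_Icc.2 zero_le_one)
    (Set.right_mem_Icc.2 zero_le_one)
  simpa [f] using this

theorem norm_mexp_sub_mexp_le {n : ℕ} {A B : Matrix (Fin n) (Fin n) ℝ} (hA : A.IsHermitian)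
    (hB : B.IsHermitian) {a r : ℝ} (heigA : ∀ i, a ≤ hA.eigenvalues i)
    (heigB : ∀ i, a ≤ hB.eigenvalues i) (hr0 : 0 < r) (hr1 : r ≤ 1) :
    ‖mexp A r - mexp B r‖ ≤ |Real.log r| * ‖toCLM A - toCLM B‖ * r ^ a := by
  rw [Real.rpow_def_of_pos hr0]
  exact norm_exp_smul_sub_exp_smul_le (Real.log_nonpos hr0.le hr1)
    (fun _ hτ ↦ norm_exp_smul_toCLM_le hA heigA hτ) (fun _ hτ ↦ norm_exp_smul_toCLM_le hB heigB hτ)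

theorem setLIntegral_log_sq_mul_rpow_lt_top {p : ℝ} (hp : -1 < p) :
    ∫⁻ r in Set.Ioo (0 : ℝ) 1, ENNReal.ofReal (Real.log r ^ 2 * r ^ p) < ∞ := by
  obtain ⟨ε, hε, hpε⟩ : ∃ ε > 0, -1 < p - 2 * ε := ⟨(p + 1) / 4, by linarith, by linarith⟩
  have hint : IntegrableOn (fun r : ℝ ↦ ε⁻¹ ^ 2 * r ^ (p - 2 * ε)) (Set.Ioo 0 1) := by
    have h := intervalIntegral.intervalIntegrable_rpow' (a := 0) (b := 1) (r := p - 2 * ε) hpε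
    rw [intervalIntegrable_iff_integrableOn_Ioc_of_le zero_le_one] at h
    exact (h.mono_set Set.Ioo_subset_Ioc_self).const_mul _
  refine lt_of_le_of_lt (setLIntegral_mono' measurableSet_Ioo fun r ⟨hr0, hr1⟩ ↦ ?_)
    hint.setLIntegral_lt_top
  refine ENNReal.ofReal_le_ofReal ?_
  have hlog : |Real.log r * r ^ ε| ≤ ε⁻¹ := by
    simpa using (Real.abs_log_mul_self_rpow_lt r ε hr0 hr1.le hε).le
  calc Real.log r ^ 2 * r ^ p = (Real.log r * r ^ ε) ^ 2 * r ^ (p - 2 * ε) := by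
        rw [mul_pow, ← Real.rpow_mul_natCast hr0.le, mul_assoc, ← Real.rpow_add hr0]
        ring_nf
    _ ≤ ε⁻¹ ^ 2 * r ^ (p - 2 * ε) := by
        refine mul_le_mul_of_nonneg_right ?_ (by positivity)
        exact sq_le_sq' (abs_le.1 hlog).1 (abs_le.1 hlog).2

theorem setLIntegral_norm_mexp_sub_mexp_apply_sq_div_sq_le {n : ℕ}
    {A B : Matrix (Fin n) (Fin n) ℝ} (hA : A.IsHermitian) (hB : B.IsHermitian) {a : ℝ}
    (heigA : ∀ i, a ≤ hA.eigenvalues i) (heigB : ∀ i, a ≤ hB.eigenvalues i)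
    {θ : EuclideanSpace ℝ (Fin n)} (hθ : ‖θ‖ ≤ 1) :
    ∫⁻ r in Set.Ioo (0 : ℝ) 1, ENNReal.ofReal (‖mexp A r θ - mexp B r θ‖ ^ 2 / r ^ 2)
      ≤ ENNReal.ofReal (‖toCLM A - toCLM B‖ ^ 2) *
        ∫⁻ r in Set.Ioo (0 : ℝ) 1, ENNReal.ofReal (Real.log r ^ 2 * r ^ (2 * a - 2)) := by
  rw [← lintegral_const_mul' _ _ ENNReal.ofReal_ne_top]
  refine setLIntegral_mono' measurableSet_Ioo fun r ⟨hr0, hr1⟩ ↦ ?_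
  rw [← ENNReal.ofReal_mul (sq_nonneg _)]
  refine ENNReal.ofReal_le_ofReal ?_
  have happ : ‖mexp A r θ - mexp B r θ‖ ≤ |Real.log r| * ‖toCLM A - toCLM B‖ * r ^ a := by
    rw [← _root_.sub_apply]
    refine ((mexp A r - mexp B r).le_of_opNorm_le
      (norm_mexp_sub_mexp_le hA hB heigA heigB hr0 hr1.le) θ).trans ?_
    exact mul_le_of_le_one_right (by positivity) hθ
  have hpow : r ^ (2 * a - 2) = (r ^ a) ^ 2 / r ^ 2 := by
    rw [Real.rpow_sub hr0, mul_comm, Real.rpow_mul hr0.le, Real.rpow_two, Real.rpow_two]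
  calc ‖mexp A r θ - mexp B r θ‖ ^ 2 / r ^ 2
      ≤ (|Real.log r| * ‖toCLM A - toCLM B‖ * r ^ a) ^ 2 / r ^ 2 := by gcongr
    _ = ‖toCLM A - toCLM B‖ ^ 2 * (Real.log r ^ 2 * r ^ (2 * a - 2)) := by
        rw [hpow, mul_pow, mul_pow, sq_abs]
        ring

theorem stmt5_general (d : ℕ) (a L : ℝ) (ha : 1/2 < a)
    (σ : Measure (Metric.sphere (0 : EuclideanSpace ℝ (Fin d)) 1)) [IsFiniteMeasure σ]
    (E : EuclideanSpace ℝ (Fin d) → Matrix (Fin d) (Fin d) ℝ)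
    (hsym : ∀ x, (E x).IsHermitian)
    (hLip : ∀ x y, ‖toCLM (E x) - toCLM (E y)‖ ≤ L * ‖x - y‖)
    (heig : ∀ x i, a ≤ (hsym x).eigenvalues i) :
    ∃ C₂ : ℝ, 0 < C₂ ∧ ∀ x y : EuclideanSpace ℝ (Fin d),
      ∫⁻ θ, ∫⁻ r in Set.Ioo (0:ℝ) 1,
          ENNReal.ofReal
            (‖mexp (E x) r (θ : EuclideanSpace ℝ (Fin d))
              - mexp (E y) r (θ : EuclideanSpace ℝ (Fin d))‖ ^ 2 / r ^ 2) ∂volume ∂σ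
        ≤ ENNReal.ofReal (C₂ * ‖x - y‖ ^ 2) := by
  set J := ∫⁻ r in Set.Ioo (0 : ℝ) 1, ENNReal.ofReal (Real.log r ^ 2 * r ^ (2 * a - 2))
  have hJ : J ≠ ∞ := (setLIntegral_log_sq_mul_rpow_lt_top (by linarith)).ne
  refine ⟨L ^ 2 * J.toReal * σ.real Set.univ + 1, by positivity, fun x y ↦ ?_⟩
  set D := ‖toCLM (E x) - toCLM (E y)‖
  calc _ ≤ ∫⁻ _, ENNReal.ofReal (D ^ 2) * J ∂σ := lintegral_mono fun θ ↦
        setLIntegral_norm_mexp_sub_mexp_apply_sq_div_sq_le (hsym x) (hsym y) (heig x) (heig y)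
          (norm_eq_of_mem_sphere θ).le
    _ = ENNReal.ofReal (D ^ 2 * J.toReal * σ.real Set.univ) := by
        rw [lintegral_const, ENNReal.ofReal_mul (by positivity), ENNReal.ofReal_mul (by positivity),
          ENNReal.ofReal_toReal hJ, ofReal_measureReal]
    _ ≤ ENNReal.ofReal ((L ^ 2 * J.toReal * σ.real Set.univ + 1) * ‖x - y‖ ^ 2) := by
        refine ENNReal.ofReal_le_ofReal ?_
        have hD : D ^ 2 ≤ L ^ 2 * ‖x - y‖ ^ 2 := by
          rw [← mul_pow]; exact pow_le_pow_left₀ (norm_nonneg _) (hLip x y) 2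
        nlinarith [sq_nonneg ‖x - y‖, mul_le_mul_of_nonneg_right hD
          (by positivity : 0 ≤ J.toReal * σ.real Set.univ)]

theorem stmt5 (d : ℕ) (a L : ℝ) (ha : 1/2 < a) (hL : 0 ≤ L)
    (σ : Measure (Metric.sphere (0 : EuclideanSpace ℝ (Fin d)) 1)) [IsFiniteMeasure σ]
    (E : EuclideanSpace ℝ (Fin d) → Matrix (Fin d) (Fin d) ℝ)
    (hsym : ∀ x, (E x).IsHermitian)
    (hLip : ∀ x y, ‖toCLM (E x) - toCLM (E y)‖ ≤ L * ‖x - y‖)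
    (heig : ∀ x i, a ≤ (hsym x).eigenvalues i) :
    ∃ C₂ : ℝ, 0 < C₂ ∧ ∀ x y : EuclideanSpace ℝ (Fin d),
      ∫⁻ θ, ∫⁻ r in Set.Ioo (0:ℝ) 1,
          ENNReal.ofReal
            (‖mexp (E x) r (θ : EuclideanSpace ℝ (Fin d))
              - mexp (E y) r (θ : EuclideanSpace ℝ (Fin d))‖ ^ 2 / r ^ 2) ∂volume ∂σ
        ≤ ENNReal.ofReal (C₂ * ‖x - y‖ ^ 2) :=
  stmt5_general d a L ha σ E hsym hLip heig
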